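/- Let R be a commutative ring, let d ≥ 3, let a_4, …, a_d ∈ R, and let I be the ideal of R generated by a_4, …, a_d. Suppose x, y, z, x', y', z' ∈ R are such that the residue rows (x̄, ȳ, z̄) and (x̄', ȳ', z̄') are unimodular over R/I and lie in the same E_3(R/I)-orbit. Then the rows (x, y, z, a_4, …, a_d) and (x', y', z', a_4, …, a_d) are unimodular over R and lie in the same E_d(R)-orbit. In particular, there is a well-defined map Um_3(R/I)/E_3(R/I) → Um_d(R)/E_d(R) sending the class of (x̄, ȳ, z̄) to the class of (x, y, z, a_4, …, a_d). -/

import Mathlib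

open Matrix Polynomial

/-- Membership in the subgroup `E_n(R)` of `GL_n(R)` generated by the elementary
matrices `1 + r·e_{ij}` (`r ∈ R`, `i ≠ j`).  Since the inverse of an elementary
matrix is again elementary, this subgroup coincides with the multiplicative
closure of the set of elementary matrices. -/
def IsElementary {ι : Type} [DecidableEq ι] [Fintype ι] {R : Type} [CommRing R]
    (M : Matrix ι ι R) : Prop :=
  M ∈ Submonoid.closure
    {A : Matrix ι ι R | ∃ (i j : ι) (r : R), i ≠ j ∧ A = 1 + Matrix.single i j r}

/-- A row `v` of length `n` is unimodular if its entries generate the unit ideal. -/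
def IsUnimodular {R : Type} [CommRing R] {n : ℕ} (v : Fin n → R) : Prop :=
  ∃ w : Fin n → R, ∑ i, v i * w i = 1

/-- Block diagonal sum `M ⊥ N`. -/
def oplus {R : Type} [CommRing R] {a b : ℕ} (M : Matrix (Fin a) (Fin a) R)
    (N : Matrix (Fin b) (Fin b) R) : Matrix (Fin (a + b)) (Fin (a + b)) R :=
  Matrix.reindex finSumFinEquiv finSumFinEquiv (Matrix.fromBlocks M 0 0 N)

/-- Reindexing a square matrix along an equality of sizes. -/
def matCast {R : Type} [CommRing R] {a b : ℕ} (h : a = b)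
    (M : Matrix (Fin a) (Fin a) R) : Matrix (Fin b) (Fin b) R :=
  Matrix.reindex (finCongr h) (finCongr h) M

/-- `ψ_m` : the block diagonal sum of copies of `[[0,1],[-1,0]]` (`m` even). -/
def psi (R : Type) [CommRing R] (m : ℕ) : Matrix (Fin m) (Fin m) R :=
  fun i j =>
    if (i : ℕ) + 1 = (j : ℕ) ∧ (i : ℕ) % 2 = 0 then 1
    else if (j : ℕ) + 1 = (i : ℕ) ∧ (j : ℕ) % 2 = 0 then -1
    else 0

/-- `σ_m` : the block diagonal sum of copies of `[[0,1],[1,0]]` (`m` even). -/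
def sigmaMat (R : Type) [CommRing R] (m : ℕ) : Matrix (Fin m) (Fin m) R :=
  fun i j =>
    if ((i : ℕ) + 1 = (j : ℕ) ∧ (i : ℕ) % 2 = 0) ∨
       ((j : ℕ) + 1 = (i : ℕ) ∧ (j : ℕ) % 2 = 0) then 1
    else 0

/-- The relation `∼` on invertible skew-symmetric matrices: for `G` of size
`2n = a` and `G'` of size `2m = b`, `G ∼ G'` iff there are `t ≥ 0` and an
elementary matrix `E ∈ E_{2(m+n+t)}(R)` with
`G ⊥ ψ_{2(m+t)} = Eᵗ (G' ⊥ ψ_{2(n+t)}) E`. -/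
def WittEquiv {R : Type} [CommRing R] {a b : ℕ} (G : Matrix (Fin a) (Fin a) R)
    (G' : Matrix (Fin b) (Fin b) R) : Prop :=
  ∃ (t : ℕ) (E : Matrix (Fin (a + (b + 2 * t))) (Fin (a + (b + 2 * t))) R),
    IsElementary E ∧
      oplus G (psi R (b + 2 * t)) =
        Eᵀ * matCast (by omega) (oplus G' (psi R (a + 2 * t))) * E

/-- The `4 × 4` invertible skew-symmetric matrix `V(v, w)` associated to a
unimodular row `v` with completion `w` (`v · wᵗ = 1`). -/
def VMat {R : Type} [CommRing R] (v w : Fin 3 → R) : Matrix (Fin 4) (Fin 4) R :=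
  !![0, v 0, v 1, v 2;
     -(v 0), 0, w 2, -(w 1);
     -(v 1), -(w 2), 0, w 0;
     -(v 2), w 1, -(w 0), 0]

/-- `n`-fold orthogonal (block diagonal) sum of a matrix with itself. -/
def oplusIter {R : Type} [CommRing R] {a : ℕ} (M : Matrix (Fin a) (Fin a) R) :
    (n : ℕ) → Matrix (Fin (n * a)) (Fin (n * a)) R
  | 0 => 0
  | n + 1 => matCast (by ring) (oplus M (oplusIter M n))

/-- The stabilization `diag(M, I_{n-d})` of a `d × d` matrix to an `n × n` matrix. -/
def stab {R : Type} [CommRing R] {d n : ℕ} (M : Matrix (Fin d) (Fin d) R) :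
    Matrix (Fin n) (Fin n) R :=
  fun i j =>
    if hi : (i : ℕ) < d then
      if hj : (j : ℕ) < d then M ⟨i, hi⟩ ⟨j, hj⟩ else 0
    else if (i : ℕ) = (j : ℕ) then 1 else 0

/-!
An elementary matrix over `R/I` lifts to an elementary matrix `F` over `R`, since the
elementary generators lift along the surjection `R → R/I`. Then `(x, y, z) F` agrees with
`(x', y', z')` modulo `I = (a₄, …, a_d)`, so the difference is `(a₄, …, a_d) C` for some
matrix `C`, and the block matrix `[[F, 0], [C, 1]]` — elementary, being `diag(F, 1)` times a
product of transvections adding multiples of the last coordinates to the first three — maps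
`(x, y, z, a₄, …, a_d)` to `(x', y', z', a₄, …, a_d)`. Unimodularity lifts for the same
reason: `1 - Σ vᵢ wᵢ ∈ I` is a combination of the `aⱼ`.
-/

section Elementary

variable {ι κ : Type} [DecidableEq ι] [Fintype ι] [DecidableEq κ] [Fintype κ]
  {R : Type} [CommRing R]

lemma isElementary_one_add_single {i j : ι} (h : i ≠ j) (r : R) :
    IsElementary (1 + single i j r) :=
  Submonoid.subset_closure ⟨i, j, r, h, rfl⟩

lemma IsElementary.mul {A B : Matrix ι ι R} (hA : IsElementary A) (hB : IsElementary B) :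
    IsElementary (A * B) :=
  mul_mem hA hB

lemma IsElementary.map_monoidHom {S : Type} [CommRing S] (f : Matrix ι ι R →* Matrix κ κ S)
    (hf : ∀ i j r, i ≠ j → IsElementary (f (1 + single i j r))) {M : Matrix ι ι R}
    (hM : IsElementary M) : IsElementary (f M) :=
  (Submonoid.closure_le (S := (Submonoid.closure _).comap f)).mpr
    (by rintro _ ⟨i, j, r, h, rfl⟩; exact hf i j r h) hM

lemma IsElementary.reindex (e : ι ≃ κ) {M : Matrix ι ι R} (hM : IsElementary M) :
    IsElementary (Matrix.reindex e e M) := by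
  refine hM.map_monoidHom (reindexAlgEquiv R R e : Matrix ι ι R →* Matrix κ κ R)
    fun i j r h => ?_
  have : Matrix.reindex e e (1 + single i j r) = 1 + single (e i) (e j) r := by
    simp [reindex_apply, submatrix_add]
  simpa [coe_reindexAlgEquiv, this] using
    isElementary_one_add_single (e.injective.ne h) r

lemma IsElementary.fromBlocks_one {M : Matrix ι ι R} (hM : IsElementary M) :
    IsElementary (fromBlocks M 0 0 (1 : Matrix κ κ R)) := by
  let f : Matrix ι ι R →* Matrix (ι ⊕ κ) (ι ⊕ κ) R :=
    { toFun := fun M => fromBlocks M 0 0 1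
      map_one' := Matrix.fromBlocks_one
      map_mul' := fun M N => by simp [fromBlocks_multiply] }
  refine hM.map_monoidHom f fun i j r h => ?_
  have : fromBlocks (1 + single i j r) 0 0 (1 : Matrix κ κ R) =
      1 + single (Sum.inl i) (Sum.inl j) r := by
    ext (a | a) (b | b) <;> simp [single, one_apply]
  simpa [f, this] using isElementary_one_add_single (Sum.inl_injective.ne h) r

lemma isElementary_fromBlocks_one_zero_one (C : Matrix κ ι R) :
    IsElementary (fromBlocks (1 : Matrix ι ι R) 0 C (1 : Matrix κ κ R)) := by
  induction C using Matrix.induction_on' with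
  | h_zero => rw [fromBlocks_one]; exact one_mem _
  | h_add C C' hC hC' =>
    have : fromBlocks (1 : Matrix ι ι R) 0 (C + C') (1 : Matrix κ κ R) =
        fromBlocks 1 0 C 1 * fromBlocks 1 0 C' 1 := by
      simp [fromBlocks_multiply, add_comm]
    rw [this]; exact hC.mul hC'
  | h_std_basis j i r =>
    have : fromBlocks (1 : Matrix ι ι R) 0 (single j i r) (1 : Matrix κ κ R) =
        1 + single (Sum.inr j) (Sum.inl i) r := by
      ext (a | a) (b | b) <;> simp [single, one_apply]
    rw [this]; exact isElementary_one_add_single Sum.inr_ne_inl r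

lemma IsElementary.fromBlocks_zero₁₂_one {F : Matrix ι ι R} (hF : IsElementary F)
    (C : Matrix κ ι R) : IsElementary (fromBlocks F 0 C (1 : Matrix κ κ R)) := by
  have : fromBlocks F 0 C (1 : Matrix κ κ R) = fromBlocks F 0 0 1 * fromBlocks 1 0 C 1 := by
    simp [fromBlocks_multiply]
  rw [this]; exact hF.fromBlocks_one.mul (isElementary_fromBlocks_one_zero_one C)

lemma IsElementary.exists_map_eq {S : Type} [CommRing S] {f : R →+* S}
    (hf : Function.Surjective f) {E : Matrix ι ι S} (hE : IsElementary E) :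
    ∃ F : Matrix ι ι R, IsElementary F ∧ F.map f = E := by
  induction hE using Submonoid.closure_induction with
  | mem _ hX =>
    obtain ⟨i, j, s, hij, rfl⟩ := hX
    obtain ⟨r, rfl⟩ := hf s
    exact ⟨1 + single i j r, isElementary_one_add_single hij r, by
      simp [Matrix.map_add, map_single]⟩
  | one => exact ⟨1, one_mem _, by simp⟩
  | mul _ _ _ _ hX hY =>
    obtain ⟨F, hF, rfl⟩ := hX
    obtain ⟨G, hG, rfl⟩ := hY
    exact ⟨F * G, hF.mul hG, Matrix.map_mul⟩

end Elementary

section Rows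

variable {R : Type} [CommRing R] {m e : ℕ}

lemma Fin.append_vecMul_reindex_fromBlocks (u : Fin m → R) (v : Fin e → R)
    (A : Matrix (Fin m) (Fin m) R) (B : Matrix (Fin m) (Fin e) R)
    (C : Matrix (Fin e) (Fin m) R) (D : Matrix (Fin e) (Fin e) R) :
    Fin.append u v ᵥ* reindex finSumFinEquiv finSumFinEquiv (fromBlocks A B C D) =
      Fin.append (u ᵥ* A + v ᵥ* C) (u ᵥ* B + v ᵥ* D) := by
  have : Fin.append u v ∘ finSumFinEquiv = Sum.elim u v := by ext (i | i) <;> simp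
  rw [reindex_apply, submatrix_vecMul_equiv, Equiv.symm_symm, this, vecMul_fromBlocks]
  ext i
  induction i using Fin.addCases <;> simp

lemma IsUnimodular.append_of_quotient_span {v : Fin m → R} {a : Fin e → R}
    (hv : IsUnimodular (Ideal.Quotient.mk (Ideal.span (Set.range a)) ∘ v)) :
    IsUnimodular (Fin.append v a) := by
  obtain ⟨w', hw'⟩ := hv
  choose w hw using fun i => Ideal.Quotient.mk_surjective (w' i)
  have : 1 - ∑ i, v i * w i ∈ Ideal.span (Set.range a) := by
    rw [← Ideal.Quotient.eq_zero_iff_mem]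
    simp [map_sum, hw, ← hw']
  rw [← Ideal.submodule_span_eq, Submodule.mem_span_range_iff_exists_fun] at this
  obtain ⟨c, hc⟩ := this
  have hc : ∑ j, a j * c j = 1 - ∑ i, v i * w i := by simpa [mul_comm] using hc
  exact ⟨Fin.append w c, by simp [Fin.sum_univ_add, hc]⟩

lemma exists_isElementary_append_vecMul_eq {a : Fin e → R} {v w : Fin m → R}
    {F : Matrix (Fin m) (Fin m) R} (hF : IsElementary F)
    (hw : ∀ i, w i - (v ᵥ* F) i ∈ Ideal.span (Set.range a)) :
    ∃ E : Matrix (Fin (m + e)) (Fin (m + e)) R, IsElementary E ∧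
      Fin.append v a ᵥ* E = Fin.append w a := by
  simp only [← Ideal.submodule_span_eq, Submodule.mem_span_range_iff_exists_fun] at hw
  choose c hc using hw
  refine ⟨_, (hF.fromBlocks_zero₁₂_one (of fun j i => c i j)).reindex finSumFinEquiv, ?_⟩
  rw [Fin.append_vecMul_reindex_fromBlocks]
  congr 1
  · ext i
    rw [Pi.add_apply, ← eq_sub_iff_add_eq', ← hc i]
    simp [vecMul, dotProduct, mul_comm]
  · simp

end Rows

/-- Let `I = (a₄, …, a_d)` (here `d = 3 + e` with
`a : Fin e → R` the list of generators).  If the residue rows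
`(x̄, ȳ, z̄)` and `(x̄', ȳ', z̄')` are unimodular over `R/I` and lie in the same
`E₃(R/I)`-orbit, then the rows `(x, y, z, a₄, …, a_d)` and
`(x', y', z', a₄, …, a_d)` are unimodular over `R` and lie in the same
`E_d(R)`-orbit.  In particular the map
`Um₃(R/I)/E₃(R/I) → Um_d(R)/E_d(R)` is well defined. -/
theorem unimodular_lift_orbit
    (R : Type) [CommRing R] (e : ℕ) (a : Fin e → R)
    (I : Ideal R) (hI : I = Ideal.span (Set.range a))
    (x y z x' y' z' : R)
    (hu : IsUnimodular
      ![Ideal.Quotient.mk I x, Ideal.Quotient.mk I y, Ideal.Quotient.mk I z])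
    (hu' : IsUnimodular
      ![Ideal.Quotient.mk I x', Ideal.Quotient.mk I y', Ideal.Quotient.mk I z'])
    (horb : ∃ E : Matrix (Fin 3) (Fin 3) (R ⧸ I), IsElementary E ∧
      ![Ideal.Quotient.mk I x, Ideal.Quotient.mk I y, Ideal.Quotient.mk I z] ᵥ* E =
        ![Ideal.Quotient.mk I x', Ideal.Quotient.mk I y', Ideal.Quotient.mk I z']) :
    IsUnimodular (Fin.append ![x, y, z] a) ∧
    IsUnimodular (Fin.append ![x', y', z'] a) ∧
    ∃ E' : Matrix (Fin (3 + e)) (Fin (3 + e)) R, IsElementary E' ∧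
      (Fin.append ![x, y, z] a) ᵥ* E' = Fin.append ![x', y', z'] a := by
  have hv : Ideal.Quotient.mk I ∘ ![x, y, z] =
      ![Ideal.Quotient.mk I x, Ideal.Quotient.mk I y, Ideal.Quotient.mk I z] := by
    ext i; fin_cases i <;> rfl
  have hv' : Ideal.Quotient.mk I ∘ ![x', y', z'] =
      ![Ideal.Quotient.mk I x', Ideal.Quotient.mk I y', Ideal.Quotient.mk I z'] := by
    ext i; fin_cases i <;> rfl
  subst hI
  obtain ⟨_, hE, hrow⟩ := horb
  obtain ⟨F, hF, rfl⟩ := hE.exists_map_eq Ideal.Quotient.mk_surjective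
  refine ⟨(hv ▸ hu).append_of_quotient_span, (hv' ▸ hu').append_of_quotient_span,
    exists_isElementary_append_vecMul_eq hF fun i => ?_⟩
  rw [← Ideal.Quotient.eq_zero_iff_mem, map_sub, sub_eq_zero, RingHom.map_vecMul, hv, hrow,
    ← hv', Function.comp_apply]
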